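/- arXiv:math/0210026 — 2 statements merged into one kernel-verified Lean document; each statement's English description precedes it below -/
import Mathlib

section
/- Let l ≥ 1 and let f₁, …, f_l be polynomials in ℝ[q₁, …, q_l] such that for all i, j ∈ {1, …, l} one has q_i·∂f_j/∂q_i = q_j·∂f_i/∂q_j. Then there exist constants c₁, …, c_l ∈ ℝ and a polynomial M ∈ ℝ[q₁, …, q_l] such that f_i = c_i + q_i·∂M/∂q_i for all i ∈ {1, …, l}. -/
/-!
The Euler derivation `θ_i = X_i ∂/∂X_i` multiplies the coefficient of `X^d` by `d_i`, so
`E = ∑ i, θ_i` multiplies it by the total degree `|d|`. For `F = ∑ j, f_j` the closedness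
condition gives `θ_i F = ∑ j, θ_j f_i = E f_i`, that is `d_i F_d = |d| (f_i)_d`. Hence
dividing every coefficient of `F` by its degree yields `M` with `θ_i M = f_i - (f_i)_0`.
-/

namespace MvPolynomial

variable {σ R : Type*}

section CommSemiring

variable [CommSemiring R]

theorem coeff_X_mul_pderiv (i : σ) (p : MvPolynomial σ R) (d : σ →₀ ℕ) :
    coeff d (X i * pderiv i p) = d i * coeff d p := by
  classical
  induction p using induction_on' with
  | monomial m r =>
    rw [X_mul_pderiv_monomial, coeff_smul, coeff_monomial]
    split_ifs with h <;> simp [h, nsmul_eq_mul]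
  | add p q hp hq => rw [map_add, mul_add, coeff_add, coeff_add, hp, hq, mul_add]

theorem coeff_sum_X_mul_pderiv [Fintype σ] (p : MvPolynomial σ R) (d : σ →₀ ℕ) :
    coeff d (∑ i, X i * pderiv i p) = d.degree * coeff d p := by
  simp only [coeff_sum, coeff_X_mul_pderiv, ← Finset.sum_mul, Finsupp.degree_eq_sum,
    Nat.cast_sum]

theorem X_mul_pderiv_sum_of_closed [Fintype σ] {f : σ → MvPolynomial σ R}
    (hf : ∀ i j, X i * pderiv i (f j) = X j * pderiv j (f i)) (i : σ) :
    X i * pderiv i (∑ j, f j) = ∑ j, X j * pderiv j (f i) := by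
  simp only [map_sum, Finset.mul_sum, hf i]

end CommSemiring

section Field

variable [Field R]

/-- Right inverse of the Euler operator `∑ i, X i * pderiv i` on polynomials without
constant term. -/
noncomputable def eulerPrimitive (p : MvPolynomial σ R) : MvPolynomial σ R :=
  ∑ d ∈ p.support, monomial d (coeff d p / d.degree)

theorem coeff_eulerPrimitive (p : MvPolynomial σ R) (d : σ →₀ ℕ) :
    coeff d (eulerPrimitive p) = coeff d p / d.degree := by
  classical
  simp only [eulerPrimitive, coeff_sum, coeff_monomial, Finset.sum_ite_eq']
  split_ifs with h
  · rfl
  · rw [notMem_support_iff.1 h, zero_div]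

theorem exists_eq_C_add_X_mul_pderiv_of_closed [Fintype σ] [CharZero R]
    (f : σ → MvPolynomial σ R)
    (hf : ∀ i j, X i * pderiv i (f j) = X j * pderiv j (f i)) :
    ∃ (c : σ → R) (M : MvPolynomial σ R), ∀ i, f i = C (c i) + X i * pderiv i M := by
  classical
  refine ⟨fun i => coeff 0 (f i), eulerPrimitive (∑ j, f j), fun i => ?_⟩
  ext d
  rw [coeff_add, coeff_C, coeff_X_mul_pderiv, coeff_eulerPrimitive]
  obtain rfl | hd := eq_or_ne d 0
  · simp
  have hdeg : (d.degree : R) ≠ 0 := Nat.cast_ne_zero.2 ((Finsupp.degree_eq_zero_iff d).not.2 hd)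
  have key : (d i : R) * coeff d (∑ j, f j) = d.degree * coeff d (f i) := by
    rw [← coeff_X_mul_pderiv, X_mul_pderiv_sum_of_closed hf, coeff_sum_X_mul_pderiv]
  rw [if_neg hd.symm, zero_add, ← mul_div_assoc, key, mul_div_cancel_left₀ _ hdeg]

end Field

end MvPolynomial

theorem stmt_3_general (l : ℕ)
    (f : Fin l → MvPolynomial (Fin l) ℝ)
    (hf : ∀ i j, MvPolynomial.X i * MvPolynomial.pderiv i (f j)
      = MvPolynomial.X j * MvPolynomial.pderiv j (f i)) :
    ∃ (c : Fin l → ℝ) (M : MvPolynomial (Fin l) ℝ),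
      ∀ i, f i = MvPolynomial.C (c i) + MvPolynomial.X i * MvPolynomial.pderiv i M :=
  MvPolynomial.exists_eq_C_add_X_mul_pderiv_of_closed f hf

/-- Closed implies exact for the Euler derivations `θ_i = q_i·∂/∂q_i`: if
`q_i·∂f_j/∂q_i = q_j·∂f_i/∂q_j` for all `i, j`, then there are constants `c_i`
and a polynomial `M` with `f_i = c_i + q_i·∂M/∂q_i`. -/
theorem stmt_3 (l : ℕ) (hl : 1 ≤ l)
    (f : Fin l → MvPolynomial (Fin l) ℝ)
    (hf : ∀ i j, MvPolynomial.X i * MvPolynomial.pderiv i (f j)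
      = MvPolynomial.X j * MvPolynomial.pderiv j (f i)) :
    ∃ (c : Fin l → ℝ) (M : MvPolynomial (Fin l) ℝ),
      ∀ i, f i = MvPolynomial.C (c i) + MvPolynomial.X i * MvPolynomial.pderiv i M :=
  stmt_3_general l f hf
end

section
/- Let l ≥ 1, let a be a real l×l matrix, let b ∈ ℝ^l, and let λ be a nonzero real number. If a polynomial p ∈ MvPolynomial (Fin l) ℝ satisfies Σ_{i,j} a_{ij}·(pderiv i (pderiv j p)) + Σ_i b_i·(pderiv i p) + λ·p = 0, then p = 0. -/
/-!
Differentiation strictly lowers the total degree, so at a monomial `X^m` of top degree in `p`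
every derivative term of `∑ aᵢⱼ ∂ᵢ∂ⱼ p + ∑ bᵢ ∂ᵢ p + λ p` has coefficient zero; the coefficient
of `X^m` in the whole expression is therefore `λ · p_m`, which is nonzero.
-/

open Finsupp

namespace MvPolynomial

variable {σ R : Type*} [CommSemiring R]

theorem coeff_pderiv_eq_zero_of_totalDegree_le {q : MvPolynomial σ R} {i : σ} {m : σ →₀ ℕ}
    (h : q.totalDegree ≤ m.degree) : (pderiv i q).coeff m = 0 := by
  have hlt : q.totalDegree < (m + single i 1).degree := by
    rw [map_add, degree_single]
    omega
  rw [coeff_pderiv, coeff_eq_zero_of_totalDegree_lt hlt, zero_mul]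

theorem totalDegree_pderiv_le (q : MvPolynomial σ R) (i : σ) :
    (pderiv i q).totalDegree ≤ q.totalDegree := by
  refine Finset.sup_le fun m hm => ?_
  by_contra! hlt
  exact mem_support_iff.mp hm (coeff_pderiv_eq_zero_of_totalDegree_le hlt.le)

theorem exists_mem_support_degree_eq_totalDegree {p : MvPolynomial σ R} (hp : p ≠ 0) :
    ∃ m ∈ p.support, m.degree = p.totalDegree :=
  Finset.exists_mem_eq_sup _ (support_nonempty.mpr hp) _ |>.imp fun _ ⟨hm, h⟩ => ⟨hm, h.symm⟩

theorem coeff_secondOrder_of_totalDegree_le [Fintype σ] (a : σ → σ → R) (b : σ → R) (lam : R)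
    {p : MvPolynomial σ R} {m : σ →₀ ℕ} (h : p.totalDegree ≤ m.degree) :
    (∑ i, ∑ j, a i j • pderiv i (pderiv j p) + ∑ i, b i • pderiv i p + lam • p).coeff m =
      lam * p.coeff m := by
  have h₂ : ∀ i j, (pderiv i (pderiv j p)).coeff m = 0 := fun i j =>
    coeff_pderiv_eq_zero_of_totalDegree_le ((totalDegree_pderiv_le p j).trans h)
  simp [coeff_sum, h₂, coeff_pderiv_eq_zero_of_totalDegree_le h]

theorem eq_zero_of_secondOrder_eq_zero [Fintype σ] [NoZeroDivisors R] (a : σ → σ → R)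
    (b : σ → R) {lam : R} (hlam : lam ≠ 0) {p : MvPolynomial σ R}
    (hp : ∑ i, ∑ j, a i j • pderiv i (pderiv j p) + ∑ i, b i • pderiv i p + lam • p = 0) :
    p = 0 := by
  by_contra hne
  obtain ⟨m, hm, hdeg⟩ := exists_mem_support_degree_eq_totalDegree hne
  have htop := coeff_secondOrder_of_totalDegree_le a b lam hdeg.ge
  rw [hp, coeff_zero] at htop
  exact mul_ne_zero hlam (mem_support_iff.mp hm) htop.symm

end MvPolynomial

theorem stmt_7_general (l : ℕ) (a : Matrix (Fin l) (Fin l) ℝ) (b : Fin l → ℝ)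
    (lam : ℝ) (hlam : lam ≠ 0) (p : MvPolynomial (Fin l) ℝ)
    (hp : ∑ i, ∑ j, a i j • MvPolynomial.pderiv i (MvPolynomial.pderiv j p)
      + ∑ i, b i • MvPolynomial.pderiv i p + lam • p = 0) :
    p = 0 :=
  MvPolynomial.eq_zero_of_secondOrder_eq_zero a b hlam hp

/-- Key step in the proof of Kim's lemma: a second-order constant-coefficient
differential operator with nonzero zeroth-order term `λ ≠ 0` is injective on
multivariate polynomials. -/
theorem stmt_7 (l : ℕ) (hl : 1 ≤ l) (a : Matrix (Fin l) (Fin l) ℝ) (b : Fin l → ℝ)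
    (lam : ℝ) (hlam : lam ≠ 0) (p : MvPolynomial (Fin l) ℝ)
    (hp : ∑ i, ∑ j, a i j • MvPolynomial.pderiv i (MvPolynomial.pderiv j p)
      + ∑ i, b i • MvPolynomial.pderiv i p + lam • p = 0) :
    p = 0 :=
  stmt_7_general l a b lam hlam p hp
end
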